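/- For the auxiliary chain B_n there is a path coupling on adjacent pairs (subsets at Hamming distance 1, both nonempty) such that the expected change in Hamming distance after one step is exactly −1/(3N); consequently, for arbitrary initial nonempty sets B_0, B_0', there is a coupling with E[d(B_n, B_n')] ≤ (1 − 1/(3N))^n · d(B_0, B_0') ≤ N(1 − 1/(3N))^n. -/
import Mathlib


/-- States of the chain: nonempty subsets of `{1,…,N}`. -/
abbrev RState (N : ℕ) := { C : Finset (Fin N) // C.Nonempty }

open Classical in
/-- The auxiliary chain `B_n`: pick `j ∈ {1,…,N}` uniformly; if `j ∉ B` add it; if `j ∈ B`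
and `|B| ≥ 2`, remove it with probability `1/3` (stay otherwise); if `j ∈ B` and `|B| = 1`,
stay. -/
noncomputable def auxP (N : ℕ) : Matrix (RState N) (RState N) ℝ :=
  fun C D =>
    if ∃ j ∉ C.1, D.1 = insert j C.1 then 1 / (N : ℝ)
    else if ∃ j ∈ C.1, D.1 = C.1.erase j then 1 / (3 * (N : ℝ))
    else if D = C then
      (if C.1.card = 1 then 1 / (N : ℝ) else 2 * C.1.card / (3 * (N : ℝ)))
    else 0

open Classical

namespace AuxPC

variable {N : ℕ}

/-- The synchronous update: coin `u < 2` means "remove" (prob 1/3 using a 6-sided die). -/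
noncomputable def upd (B : RState N) (j : Fin N) (u : Fin 6) : RState N :=
  if h : j ∈ B.1 then
    (if h2 : 2 ≤ B.1.card ∧ u.val < 2 then
      ⟨B.1.erase j, by
        rw [← Finset.card_pos, Finset.card_erase_of_mem h]; omega⟩
    else B)
  else ⟨insert j B.1, Finset.insert_nonempty _ _⟩

lemma card_ge_two_of_mem_ne {A : Finset (Fin N)} {a b : Fin N} (ha : a ∈ A) (hb : b ∈ A)
    (hab : a ≠ b) : 2 ≤ A.card :=
  Finset.one_lt_card.2 ⟨a, ha, b, hb, hab⟩

lemma inner_sum (B D : RState N) (j : Fin N) :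
    ∑ u : Fin 6, (if upd B j u = D then 1 / (6 * (N:ℝ)) else 0)
    = if j ∈ B.1 then
        (if B.1.card = 1 then (if D = B then 1/(N:ℝ) else 0)
         else (if D.1 = B.1.erase j then 1/(3*(N:ℝ)) else 0)
              + (if D = B then 2*(1/(3*(N:ℝ))) else 0))
      else (if D.1 = insert j B.1 then 1/(N:ℝ) else 0) := by
  by_cases h : j ∈ B.1
  · have hc1 : 1 ≤ B.1.card := Finset.card_pos.2 B.2
    by_cases hc : B.1.card = 1
    · have : ∀ u : Fin 6, upd B j u = B := by
        intro u; simp [upd, h, hc]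
      simp only [this, h, if_true, hc, Fin.sum_univ_six, eq_comm (a := B) (b := D)]
      split <;> ring
    · have hc2 : 2 ≤ B.1.card := by omega
      have hne : (B.1.erase j).Nonempty := by
        rw [← Finset.card_pos, Finset.card_erase_of_mem h]; omega
      have he : ∀ u : Fin 6, u.val < 2 →
          upd B j u = ⟨B.1.erase j, hne⟩ := by
        intro u hu; simp [upd, h, hc2, hu]
      have hs : ∀ u : Fin 6, ¬ u.val < 2 → upd B j u = B := by
        intro u hu; simp [upd, h, hu]
      rw [Fin.sum_univ_six]
      rw [he 0 (by decide), he 1 (by decide), hs 2 (by decide),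
        hs 3 (by decide), hs 4 (by decide), hs 5 (by decide)]
      have hDe : (⟨B.1.erase j, hne⟩ : RState N) = D
          ↔ D.1 = B.1.erase j := by
        rw [Subtype.ext_iff]; exact eq_comm
      have hDB : B = D ↔ D = B := eq_comm
      simp only [h, if_true, hc, if_false, hDe, hDB]
      split <;> split <;> ring
  · have : ∀ u : Fin 6, upd B j u = ⟨insert j B.1, Finset.insert_nonempty _ _⟩ := by
      intro u; simp [upd, h]
    simp only [this, Fin.sum_univ_six]
    have hD : (⟨insert j B.1, Finset.insert_nonempty _ _⟩ : RState N) = D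
        ↔ D.1 = insert j B.1 := by rw [Subtype.ext_iff]; exact eq_comm
    simp only [h, if_false, hD]
    split <;> ring

end AuxPC

namespace AuxPC

variable {N : ℕ}

lemma law_upd (B D : RState N) :
    ∑ j : Fin N, ∑ u : Fin 6, (if upd B j u = D then 1 / (6 * (N:ℝ)) else 0)
    = auxP N B D := by
  simp only [inner_sum]
  show _ = auxP N B D
  rw [auxP]
  by_cases hA : ∃ j ∉ B.1, D.1 = insert j B.1
  · rw [if_pos hA]
    obtain ⟨j0, hj0, hD⟩ := hA
    have hcard : D.1.card = B.1.card + 1 := by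
      rw [hD, Finset.card_insert_of_notMem hj0]
    have hDB : D ≠ B := by
      intro h; rw [h] at hcard; omega
    have hc1 : 1 ≤ B.1.card := Finset.card_pos.2 B.2
    rw [Finset.sum_eq_single j0]
    · simp [hj0, hD]
    · intro j _ hne
      by_cases hj : j ∈ B.1
      · have hctr : ¬ D.1 = B.1.erase j := by
          intro h
          rw [h, Finset.card_erase_of_mem hj] at hcard; omega
        simp [hj, hctr, hDB]
      · have : ¬ D.1 = insert j B.1 := by
          intro h
          have hmem : j ∈ D.1 := by
            rw [h]; exact Finset.mem_insert_self _ _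
          rw [hD] at hmem
          rcases Finset.mem_insert.1 hmem with h' | h'
          · exact hne h'
          · exact hj h'
        simp [hj, this]
    · simp
  · rw [if_neg hA]
    by_cases hB : ∃ j ∈ B.1, D.1 = B.1.erase j
    · rw [if_pos hB]
      obtain ⟨j0, hj0, hD⟩ := hB
      have hc2 : 2 ≤ B.1.card := by
        have : 0 < D.1.card := Finset.card_pos.2 D.2
        rw [hD, Finset.card_erase_of_mem hj0] at this; omega
      have hcne : B.1.card ≠ 1 := by omega
      have hDB : D ≠ B := by
        intro h
        have : j0 ∈ D.1 := by rw [h]; exact hj0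
        rw [hD] at this
        exact Finset.notMem_erase _ _ this
      rw [Finset.sum_eq_single j0]
      · simp [hj0, hcne, hD, hDB]
      · intro j _ hne
        by_cases hj : j ∈ B.1
        · have hctr : ¬ D.1 = B.1.erase j := by
            intro h
            have : j ∈ B.1.erase j0 := Finset.mem_erase.2 ⟨hne, hj⟩
            rw [← hD, h] at this
            exact Finset.notMem_erase _ _ this
          simp [hj, hcne, hctr, hDB]
        · have : ¬ D.1 = insert j B.1 := fun h => hA ⟨j, hj, h⟩
          simp [hj, this]
      · simp
    · rw [if_neg hB]
      by_cases hD : D = B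
      · subst hD
        simp only [eq_self_iff_true, if_true]
        have key : ∀ j : Fin N, (if j ∈ D.1 then
            (if D.1.card = 1 then (1/(N:ℝ))
             else (if D.1 = D.1.erase j then 1/(3*(N:ℝ)) else 0)
                  + (2*(1/(3*(N:ℝ)))))
          else (if D.1 = insert j D.1 then 1/(N:ℝ) else 0))
          = if j ∈ D.1 then
              (if D.1.card = 1 then 1/(N:ℝ) else 2*(1/(3*(N:ℝ)))) else 0 := by
          intro j
          by_cases hj : j ∈ D.1
          · have h1 : ¬ D.1 = D.1.erase j := by
              intro h
              have := Finset.notMem_erase j D.1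
              rw [← h] at this; exact this hj
            simp only [hj, if_true, h1, if_false, zero_add]
          · have h2 : ¬ D.1 = insert j D.1 := by
              intro h
              apply hj; rw [h]; exact Finset.mem_insert_self _ _
            simp only [hj, if_false, h2]
        rw [Finset.sum_congr rfl (fun j _ => key j)]
        rw [Finset.sum_ite_mem, Finset.univ_inter, Finset.sum_const,
          nsmul_eq_mul]
        by_cases hc : D.1.card = 1
        · simp [hc]
        · simp only [hc, if_false]
          ring
      · simp only [hD, if_false]
        apply Finset.sum_eq_zero
        intro j _
        by_cases hj : j ∈ B.1
        · have h1 : ¬ D.1 = B.1.erase j := fun h => hB ⟨j, hj, h⟩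
          simp [hj, h1, hD]
        · have h2 : ¬ D.1 = insert j B.1 := fun h => hA ⟨j, hj, h⟩
          simp [hj, h2]

end AuxPC

namespace AuxPC

variable {N : ℕ}

lemma sd_ins {A : Finset (Fin N)} {i : Fin N} (hi : i ∉ A) :
    symmDiff (insert i A) A = {i} := by
  ext x; simp only [Finset.mem_symmDiff, Finset.mem_insert, Finset.mem_singleton]
  constructor
  · rintro (⟨h1 | h1, h2⟩ | ⟨h1, h2⟩) <;> tauto
  · rintro rfl; tauto

lemma sd_ins' {A : Finset (Fin N)} {i : Fin N} (hi : i ∉ A) :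
    symmDiff A (insert i A) = {i} := by rw [symmDiff_comm]; exact sd_ins hi

lemma sd_ins_ins {A : Finset (Fin N)} {i j : Fin N} (hi : i ∉ A) (hj : j ≠ i) :
    symmDiff (insert j A) (insert j (insert i A)) = {i} := by
  ext x; simp only [Finset.mem_symmDiff, Finset.mem_insert, Finset.mem_singleton]
  constructor
  · rintro (⟨h1, h2⟩ | ⟨h1 | h1 | h1, h2⟩) <;> tauto
  · rintro rfl
    right; constructor
    · tauto
    · push_neg; exact ⟨fun h => hj h.symm, hi⟩

lemma sd_erase_erase {A : Finset (Fin N)} {i j : Fin N} (hi : i ∉ A) (hj : j ∈ A)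
    (hji : j ≠ i) : symmDiff (A.erase j) ((insert i A).erase j) = {i} := by
  ext x
  simp only [Finset.mem_symmDiff, Finset.mem_erase, Finset.mem_insert, Finset.mem_singleton]
  constructor
  · rintro (⟨⟨h1, h2⟩, h3⟩ | ⟨⟨h1, h2 | h2⟩, h3⟩) <;> tauto
  · rintro rfl
    right; constructor
    · exact ⟨fun h => hji h.symm, Or.inl rfl⟩
    · push_neg; intro _; exact hi

lemma sd_erase_full {A : Finset (Fin N)} {i b : Fin N} (hi : i ∉ A) (hb : b ∈ A) :
    symmDiff (A.erase b) (insert i A) = {b, i} := by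
  have hbi : b ≠ i := fun h => hi (h ▸ hb)
  ext x
  simp only [Finset.mem_symmDiff, Finset.mem_erase, Finset.mem_insert, Finset.mem_singleton]
  by_cases hxb : x = b <;> by_cases hxi : x = i <;> subst_vars <;> simp_all <;> tauto

lemma sd_stay_erase {A : Finset (Fin N)} {i b : Fin N} (hi : i ∉ A) (hb : b ∈ A) :
    symmDiff A ((insert i A).erase b) = {b, i} := by
  have hbi : b ≠ i := fun h => hi (h ▸ hb)
  ext x
  simp only [Finset.mem_symmDiff, Finset.mem_erase, Finset.mem_insert, Finset.mem_singleton]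
  by_cases hxb : x = b <;> by_cases hxi : x = i <;> subst_vars <;> simp_all <;> tauto

lemma card_pair_ne {i b : Fin N} (h : b ≠ i) : ({b, i} : Finset (Fin N)).card = 2 := by
  rw [Finset.card_insert_of_notMem (by simp [h]), Finset.card_singleton]

end AuxPC

namespace AuxPC

variable {N : ℕ}

lemma erase_nonempty_of_two_le {A : Finset (Fin N)} {j : Fin N} (h : 2 ≤ A.card) :
    (A.erase j).Nonempty := by
  rw [← Finset.card_pos]
  by_cases hj : j ∈ A
  · rw [Finset.card_erase_of_mem hj]; omega
  · rw [Finset.erase_eq_of_notMem hj]; omega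

lemma upd_notMem {B : RState N} {j : Fin N} (u : Fin 6) (h : j ∉ B.1) :
    upd B j u = ⟨insert j B.1, Finset.insert_nonempty _ _⟩ := by simp [upd, h]

lemma upd_stay {B : RState N} {j : Fin N} {u : Fin 6} (h : j ∈ B.1)
    (h2 : ¬(2 ≤ B.1.card ∧ u.val < 2)) : upd B j u = B := by
  simp only [upd, dif_pos h]; rw [dif_neg h2]

lemma upd_erase {B : RState N} {j : Fin N} {u : Fin 6} (h : j ∈ B.1)
    (hc : 2 ≤ B.1.card) (hu : u.val < 2) :
    upd B j u = ⟨B.1.erase j, erase_nonempty_of_two_le hc⟩ := by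
  simp only [upd, dif_pos h]; rw [dif_pos ⟨hc, hu⟩]

/-- push-forward coupling of two random maps on `Fin N × Fin 6` with the uniform law. -/
noncomputable def pc (F G : Fin N × Fin 6 → RState N) : RState N → RState N → ℝ :=
  fun x y => ∑ ω : Fin N × Fin 6, if F ω = x ∧ G ω = y then 1 / (6 * (N:ℝ)) else 0

lemma pc_nonneg (F G : Fin N × Fin 6 → RState N) (x y : RState N) : 0 ≤ pc F G x y := by
  apply Finset.sum_nonneg
  intro ω _
  split
  · positivity
  · exact le_refl 0

lemma pc_row (F G : Fin N × Fin 6 → RState N) (x : RState N) :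
    ∑ y : RState N, pc F G x y
    = ∑ ω : Fin N × Fin 6, (if F ω = x then 1 / (6 * (N:ℝ)) else 0) := by
  unfold pc
  rw [Finset.sum_comm]
  refine Finset.sum_congr rfl fun ω _ => ?_
  by_cases h : F ω = x
  · simp [h]
  · simp [h]

lemma pc_col (F G : Fin N × Fin 6 → RState N) (y : RState N) :
    ∑ x : RState N, pc F G x y
    = ∑ ω : Fin N × Fin 6, (if G ω = y then 1 / (6 * (N:ℝ)) else 0) := by
  unfold pc
  rw [Finset.sum_comm]
  refine Finset.sum_congr rfl fun ω _ => ?_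
  by_cases h : G ω = y
  · simp [h]
  · simp [h]

lemma pc_expect (F G : Fin N × Fin 6 → RState N) :
    ∑ x : RState N, ∑ y : RState N,
      pc F G x y * ((symmDiff x.1 y.1).card : ℝ)
    = ∑ ω : Fin N × Fin 6,
        (1 / (6 * (N:ℝ))) * ((symmDiff (F ω).1 (G ω).1).card : ℝ) := by
  have step : ∀ x y : RState N,
      pc F G x y * ((symmDiff x.1 y.1).card : ℝ)
      = ∑ ω : Fin N × Fin 6, (if F ω = x ∧ G ω = y then
          (1/(6*(N:ℝ))) * ((symmDiff x.1 y.1).card : ℝ) else 0) := by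
    intro x y
    unfold pc
    rw [Finset.sum_mul]
    refine Finset.sum_congr rfl fun ω _ => ?_
    split <;> simp
  rw [Finset.sum_congr rfl (fun x _ => Finset.sum_congr rfl (fun y _ => step x y))]
  rw [Finset.sum_congr rfl (fun x (_ : x ∈ Finset.univ) => Finset.sum_comm)]
  rw [Finset.sum_comm]
  refine Finset.sum_congr rfl fun ω _ => ?_
  rw [← Finset.sum_product']
  rw [Finset.sum_eq_single_of_mem (F ω, G ω) (by simp)]
  · simp
  · intro p _ hp
    have : ¬(F ω = p.1 ∧ G ω = p.2) := by
      intro h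
      exact hp (Prod.ext_iff.mpr ⟨h.1.symm, h.2.symm⟩)
    simp [this]

lemma upd_stay' {B : RState N} {j : Fin N} {u : Fin 6} (h : j ∈ B.1)
    (hu : ¬ u.val < 2) : upd B j u = B := upd_stay h (fun h2 => hu h2.2)

lemma upd_stay1 {B : RState N} {j : Fin N} {u : Fin 6} (h : j ∈ B.1)
    (hc : B.1.card = 1) : upd B j u = B :=
  upd_stay h (fun h2 => by omega)

lemma adjacent (hN : 1 ≤ N) (B B' : RState N) (i : Fin N) (hi : i ∉ B.1)
    (hB' : B'.1 = insert i B.1) :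
    ∃ ρ : RState N → RState N → ℝ,
      (∀ x y, 0 ≤ ρ x y) ∧
      (∀ x, ∑ y : RState N, ρ x y = auxP N B x) ∧
      (∀ y, ∑ x : RState N, ρ x y = auxP N B' y) ∧
      (∑ x : RState N, ∑ y : RState N,
        ρ x y * ((symmDiff x.1 y.1).card : ℝ)) = 1 - 1 / (3 * (N:ℝ)) := by
  obtain ⟨b, hb⟩ := B.2
  have hib : i ≠ b := fun h => hi (h ▸ hb)
  have hbi : b ≠ i := fun h => hib h.symm
  have hiB' : i ∈ B'.1 := by rw [hB']; exact Finset.mem_insert_self _ _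
  have hbB' : b ∈ B'.1 := by rw [hB']; exact Finset.mem_insert_of_mem hb
  have hc1 : 1 ≤ B.1.card := Finset.card_pos.2 B.2
  have hcB' : 2 ≤ B'.1.card := by
    rw [hB', Finset.card_insert_of_notMem hi]; omega
  refine ⟨pc (fun ω => upd B ω.1 ω.2)
      (fun ω => upd B' ω.1 (if ω.1 = b then ω.2 - 1 else ω.2)),
    pc_nonneg _ _, ?_, ?_, ?_⟩
  · intro x
    rw [pc_row, ← law_upd B x, Fintype.sum_prod_type]
  · intro y
    rw [pc_col, ← law_upd B' y, Fintype.sum_prod_type]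
    refine Finset.sum_congr rfl fun j _ => ?_
    by_cases hj : j = b
    · subst hj
      simp only [if_pos rfl]
      exact Fintype.sum_equiv (Equiv.subRight (1 : Fin 6)) _ _ (fun u => rfl)
    · simp only [if_neg hj]
  · rw [pc_expect, Fintype.sum_prod_type]
    have key : ∀ j : Fin N,
        (∑ u : Fin 6, (1 / (6 * (N:ℝ))) *
          ((symmDiff (upd B j u).1
            (upd B' j (if j = b then u - 1 else u)).1).card : ℝ))
        = (1 / (6 * (N:ℝ))) *
            ((6:ℝ) + (if j = i then -4 else 0) + (if j = b then 2 else 0)) := by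
      intro j
      by_cases hji : j = i
      · have hjb : ¬ j = b := fun h => hib (hji.symm.trans h)
        subst hji
        simp only [if_neg hjb, eq_self_iff_true, if_true]
        have hF' : ∀ u : Fin 6, (upd B j u).1 = insert j B.1 := by
          intro u; rw [upd_notMem u hi]
        have hG0 : ∀ u : Fin 6, u.val < 2 → (upd B' j u).1 = B.1 := by
          intro u hu; rw [upd_erase hiB' hcB' hu]
          show B'.1.erase j = B.1
          rw [hB', Finset.erase_insert hi]
        have hG1 : ∀ u : Fin 6, ¬ u.val < 2 → (upd B' j u).1 = insert j B.1 := by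
          intro u hu; rw [upd_stay' hiB' hu]; exact hB'
        rw [Fin.sum_univ_six]
        rw [hF' 0, hF' 1, hF' 2, hF' 3, hF' 4, hF' 5,
          hG0 0 (by decide), hG0 1 (by decide), hG1 2 (by decide),
          hG1 3 (by decide), hG1 4 (by decide), hG1 5 (by decide)]
        rw [sd_ins hi, symmDiff_self]
        simp only [Finset.card_singleton, Finset.bot_eq_empty, Finset.card_empty]
        push_cast
        ring
      · by_cases hjb : j = b
        · subst hjb
          simp only [eq_self_iff_true, if_true, if_neg hji]
          have hGe : ∀ u : Fin 6, u.val < 2 →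
              (upd B' j u).1 = (insert i B.1).erase j := by
            intro u hu; rw [upd_erase hbB' hcB' hu]
            show B'.1.erase j = (insert i B.1).erase j
            rw [hB']
          have hGs : ∀ u : Fin 6, ¬ u.val < 2 → (upd B' j u).1 = insert i B.1 := by
            intro u hu; rw [upd_stay' hbB' hu]; exact hB'
          rw [Fin.sum_univ_six]
          by_cases hc2 : 2 ≤ B.1.card
          · have hFe : ∀ u : Fin 6, u.val < 2 → (upd B j u).1 = B.1.erase j := by
              intro u hu; rw [upd_erase hb hc2 hu]
            have hFs : ∀ u : Fin 6, ¬ u.val < 2 → (upd B j u).1 = B.1 := by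
              intro u hu; rw [upd_stay' hb hu]
            rw [hFe 0 (by decide), hFe 1 (by decide), hFs 2 (by decide),
              hFs 3 (by decide), hFs 4 (by decide), hFs 5 (by decide),
              hGs (0-1) (by decide), hGe (1-1) (by decide), hGe (2-1) (by decide),
              hGs (3-1) (by decide), hGs (4-1) (by decide), hGs (5-1) (by decide)]
            rw [sd_erase_full hi hb, sd_erase_erase hi hb hbi, sd_stay_erase hi hb,
              sd_ins' hi]
            simp only [Finset.card_singleton, card_pair_ne hbi]
            push_cast
            ring
          · have hc1' : B.1.card = 1 := by omega
            have hFs : ∀ u : Fin 6, (upd B j u).1 = B.1 := by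
              intro u; rw [upd_stay1 hb hc1']
            rw [hFs 0, hFs 1, hFs 2, hFs 3, hFs 4, hFs 5,
              hGs (0-1) (by decide), hGe (1-1) (by decide), hGe (2-1) (by decide),
              hGs (3-1) (by decide), hGs (4-1) (by decide), hGs (5-1) (by decide)]
            rw [sd_stay_erase hi hb, sd_ins' hi]
            simp only [Finset.card_singleton, card_pair_ne hbi]
            push_cast
            ring
        · simp only [if_neg hji, if_neg hjb]
          rw [Fin.sum_univ_six]
          by_cases hj : j ∈ B.1
          · have hc2 : 2 ≤ B.1.card := card_ge_two_of_mem_ne hj hb hjb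
            have hjB' : j ∈ B'.1 := by rw [hB']; exact Finset.mem_insert_of_mem hj
            have hFe : ∀ u : Fin 6, u.val < 2 → (upd B j u).1 = B.1.erase j := by
              intro u hu; rw [upd_erase hj hc2 hu]
            have hFs : ∀ u : Fin 6, ¬ u.val < 2 → (upd B j u).1 = B.1 := by
              intro u hu; rw [upd_stay' hj hu]
            have hGe : ∀ u : Fin 6, u.val < 2 →
                (upd B' j u).1 = (insert i B.1).erase j := by
              intro u hu; rw [upd_erase hjB' hcB' hu]
              show B'.1.erase j = (insert i B.1).erase j
              rw [hB']
            have hGs : ∀ u : Fin 6, ¬ u.val < 2 → (upd B' j u).1 = insert i B.1 := by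
              intro u hu; rw [upd_stay' hjB' hu]; exact hB'
            rw [hFe 0 (by decide), hFe 1 (by decide), hFs 2 (by decide),
              hFs 3 (by decide), hFs 4 (by decide), hFs 5 (by decide),
              hGe 0 (by decide), hGe 1 (by decide), hGs 2 (by decide),
              hGs 3 (by decide), hGs 4 (by decide), hGs 5 (by decide)]
            rw [sd_erase_erase hi hj hji, sd_ins' hi]
            simp only [Finset.card_singleton]
            push_cast
            ring
          · have hjB' : j ∉ B'.1 := by
              rw [hB']; simp only [Finset.mem_insert]
              push_neg; exact ⟨hji, hj⟩
            have hF : ∀ u : Fin 6, (upd B j u).1 = insert j B.1 := by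
              intro u; rw [upd_notMem u hj]
            have hG : ∀ u : Fin 6, (upd B' j u).1 = insert j (insert i B.1) := by
              intro u; rw [upd_notMem u hjB']
              show insert j B'.1 = insert j (insert i B.1)
              rw [hB']
            rw [hF 0, hF 1, hF 2, hF 3, hF 4, hF 5,
              hG 0, hG 1, hG 2, hG 3, hG 4, hG 5]
            rw [sd_ins_ins hi hji]
            simp only [Finset.card_singleton]
            push_cast
            ring
    rw [Finset.sum_congr rfl (fun j _ => key j), ← Finset.mul_sum]
    rw [Finset.sum_add_distrib, Finset.sum_add_distrib, Finset.sum_const,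
      Finset.sum_ite_eq' Finset.univ i, Finset.sum_ite_eq' Finset.univ b]
    simp only [Finset.mem_univ, if_true, Finset.card_univ, Fintype.card_fin,
      nsmul_eq_mul]
    have hNne : (N:ℝ) ≠ 0 := Nat.cast_ne_zero.2 (by omega)
    field_simp
    ring

lemma auxP_nonneg (B D : RState N) : 0 ≤ auxP N B D := by
  rw [← law_upd]
  apply Finset.sum_nonneg
  intro j _
  apply Finset.sum_nonneg
  intro u _
  split
  · positivity
  · exact le_refl 0

lemma sd_triangle (a b c : Finset (Fin N)) :
    ((symmDiff a c).card : ℝ) ≤ (symmDiff a b).card + (symmDiff b c).card := by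
  have hsub : symmDiff a c ⊆ symmDiff a b ∪ symmDiff b c := by
    intro x hx
    simp only [Finset.mem_symmDiff, Finset.mem_union] at *
    tauto
  have h2 := (Finset.card_le_card hsub).trans (Finset.card_union_le _ _)
  exact_mod_cast h2

lemma glue {μ ν π : RState N → ℝ} {ρ1 ρ2 : RState N → RState N → ℝ}
    (h1n : ∀ x y, 0 ≤ ρ1 x y) (h1r : ∀ x, ∑ y : RState N, ρ1 x y = μ x)
    (h1c : ∀ y, ∑ x : RState N, ρ1 x y = ν y)
    (h2n : ∀ x y, 0 ≤ ρ2 x y) (h2r : ∀ x, ∑ y : RState N, ρ2 x y = ν x)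
    (h2c : ∀ y, ∑ x : RState N, ρ2 x y = π y) :
    ∃ ρ : RState N → RState N → ℝ,
      (∀ x y, 0 ≤ ρ x y) ∧ (∀ x, ∑ y : RState N, ρ x y = μ x) ∧
      (∀ y, ∑ x : RState N, ρ x y = π y) ∧
      (∑ x : RState N, ∑ z : RState N, ρ x z * ((symmDiff x.1 z.1).card : ℝ))
        ≤ (∑ x : RState N, ∑ y : RState N, ρ1 x y * ((symmDiff x.1 y.1).card : ℝ))
          + (∑ y : RState N, ∑ z : RState N, ρ2 y z * ((symmDiff y.1 z.1).card : ℝ)) := by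
  have hν0 : ∀ y, ν y = 0 → ∀ x, ρ1 x y = 0 := by
    intro y hy x
    have hsum := h1c y
    rw [hy] at hsum
    exact (Finset.sum_eq_zero_iff_of_nonneg (fun x _ => h1n x y)).1 hsum x (Finset.mem_univ x)
  have hν0' : ∀ y, ν y = 0 → ∀ z, ρ2 y z = 0 := by
    intro y hy z
    have hsum := h2r y
    rw [hy] at hsum
    exact (Finset.sum_eq_zero_iff_of_nonneg (fun z _ => h2n y z)).1 hsum z (Finset.mem_univ z)
  set t : RState N → RState N → RState N → ℝ :=
    fun x y z => if ν y = 0 then 0 else ρ1 x y * ρ2 y z / ν y with ht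
  have htn : ∀ x y z, 0 ≤ t x y z := by
    intro x y z
    rw [ht]
    dsimp only
    split
    · exact le_refl 0
    · have hνnn : 0 ≤ ν y := by rw [← h1c y]; exact Finset.sum_nonneg fun x _ => h1n x y
      exact div_nonneg (mul_nonneg (h1n x y) (h2n y z)) hνnn
  have hsz : ∀ x y, ∑ z : RState N, t x y z = ρ1 x y := by
    intro x y
    by_cases hy : ν y = 0
    · simp [ht, hy, hν0 y hy x]
    · simp only [ht, hy, if_false]
      rw [← Finset.sum_div, ← Finset.mul_sum, h2r y, mul_div_assoc, div_self hy, mul_one]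
  have hsx : ∀ y z, ∑ x : RState N, t x y z = ρ2 y z := by
    intro y z
    by_cases hy : ν y = 0
    · simp [ht, hy, hν0' y hy z]
    · simp only [ht, hy, if_false]
      rw [← Finset.sum_div, ← Finset.sum_mul, h1c y, mul_comm, mul_div_assoc,
        div_self hy, mul_one]
  refine ⟨fun x z => ∑ y : RState N, t x y z,
    fun x z => Finset.sum_nonneg fun y _ => htn x y z, ?_, ?_, ?_⟩
  · intro x
    rw [Finset.sum_comm]
    rw [Finset.sum_congr rfl (fun y _ => hsz x y)]
    exact h1r x
  · intro z
    rw [Finset.sum_comm]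
    rw [Finset.sum_congr rfl (fun y _ => hsx y z)]
    exact h2c z
  · have step1 : ∀ x z, (∑ y : RState N, t x y z) * ((symmDiff x.1 z.1).card : ℝ)
        = ∑ y : RState N, t x y z * ((symmDiff x.1 z.1).card : ℝ) := by
      intro x z; rw [Finset.sum_mul]
    calc ∑ x : RState N, ∑ z : RState N,
          (∑ y : RState N, t x y z) * ((symmDiff x.1 z.1).card : ℝ)
        = ∑ x : RState N, ∑ z : RState N, ∑ y : RState N,
            t x y z * ((symmDiff x.1 z.1).card : ℝ) := by
          exact Finset.sum_congr rfl fun x _ => Finset.sum_congr rfl fun z _ => step1 x z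
      _ ≤ ∑ x : RState N, ∑ z : RState N, ∑ y : RState N,
            t x y z * (((symmDiff x.1 y.1).card : ℝ) + ((symmDiff y.1 z.1).card : ℝ)) := by
          refine Finset.sum_le_sum fun x _ => Finset.sum_le_sum fun z _ =>
            Finset.sum_le_sum fun y _ => ?_
          exact mul_le_mul_of_nonneg_left (sd_triangle x.1 y.1 z.1) (htn x y z)
      _ = (∑ x : RState N, ∑ z : RState N, ∑ y : RState N,
            t x y z * ((symmDiff x.1 y.1).card : ℝ))
          + (∑ x : RState N, ∑ z : RState N, ∑ y : RState N,
            t x y z * ((symmDiff y.1 z.1).card : ℝ)) := by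
          rw [← Finset.sum_add_distrib]
          refine Finset.sum_congr rfl fun x _ => ?_
          rw [← Finset.sum_add_distrib]
          refine Finset.sum_congr rfl fun z _ => ?_
          rw [← Finset.sum_add_distrib]
          refine Finset.sum_congr rfl fun y _ => ?_
          ring
      _ = (∑ x : RState N, ∑ y : RState N, ρ1 x y * ((symmDiff x.1 y.1).card : ℝ))
          + (∑ y : RState N, ∑ z : RState N, ρ2 y z * ((symmDiff y.1 z.1).card : ℝ)) := by
          have hA : (∑ x : RState N, ∑ z : RState N, ∑ y : RState N,
              t x y z * ((symmDiff x.1 y.1).card : ℝ))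
              = ∑ x : RState N, ∑ y : RState N, ρ1 x y * ((symmDiff x.1 y.1).card : ℝ) := by
            refine Finset.sum_congr rfl fun x _ => ?_
            rw [Finset.sum_comm]
            refine Finset.sum_congr rfl fun y _ => ?_
            rw [← Finset.sum_mul, hsz x y]
          have hB : (∑ x : RState N, ∑ z : RState N, ∑ y : RState N,
              t x y z * ((symmDiff y.1 z.1).card : ℝ))
              = ∑ y : RState N, ∑ z : RState N, ρ2 y z * ((symmDiff y.1 z.1).card : ℝ) := by
            rw [Finset.sum_comm]
            rw [Finset.sum_congr rfl (fun z (_ : z ∈ Finset.univ) => Finset.sum_comm)]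
            rw [Finset.sum_congr rfl (fun z (_ : z ∈ Finset.univ) =>
              Finset.sum_congr rfl (fun y _ => by rw [← Finset.sum_mul, hsx y z]))]
            exact Finset.sum_comm
          rw [hA, hB]

lemma sd_erase_self {A : Finset (Fin N)} {i : Fin N} (hi : i ∈ A) :
    symmDiff A (A.erase i) = {i} := by
  ext x
  simp only [Finset.mem_symmDiff, Finset.mem_erase, Finset.mem_singleton]
  by_cases hx : x = i <;> subst_vars <;> simp_all <;> tauto

lemma sd_insert_absorb {A A' : Finset (Fin N)} {i : Fin N} (hiA : i ∉ A) (hiA' : i ∈ A') :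
    symmDiff (insert i A) A' = (symmDiff A A').erase i := by
  ext x
  simp only [Finset.mem_symmDiff, Finset.mem_erase, Finset.mem_insert]
  by_cases hx : x = i <;> subst_vars <;> simp_all <;> tauto

lemma sd_erase_absorb {A A' : Finset (Fin N)} {i : Fin N} (hiA : i ∈ A) (hiA' : i ∉ A') :
    symmDiff (A.erase i) A' = (symmDiff A A').erase i := by
  ext x
  simp only [Finset.mem_symmDiff, Finset.mem_erase]
  by_cases hx : x = i <;> subst_vars <;> simp_all <;> tauto

lemma middle (B B' : RState N) (h : 1 ≤ (symmDiff B.1 B'.1).card) :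
    ∃ C : RState N, (symmDiff B.1 C.1).card = 1 ∧
      (symmDiff C.1 B'.1).card = (symmDiff B.1 B'.1).card - 1 := by
  by_cases hne : (B'.1 \ B.1).Nonempty
  · obtain ⟨i, hi⟩ := hne
    rw [Finset.mem_sdiff] at hi
    have hsd : i ∈ symmDiff B.1 B'.1 := by
      rw [Finset.mem_symmDiff]; tauto
    refine ⟨⟨insert i B.1, Finset.insert_nonempty _ _⟩, ?_, ?_⟩
    · show (symmDiff B.1 (insert i B.1)).card = 1
      rw [sd_ins' hi.2, Finset.card_singleton]
    · show (symmDiff (insert i B.1) B'.1).card = _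
      rw [sd_insert_absorb hi.2 hi.1, Finset.card_erase_of_mem hsd]
  · have hsub : B'.1 ⊆ B.1 := by
      rw [← Finset.sdiff_eq_empty_iff_subset]
      exact Finset.not_nonempty_iff_eq_empty.1 hne
    have hsd_eq : symmDiff B.1 B'.1 = B.1 \ B'.1 := by
      rw [symmDiff_def]
      show B.1 \ B'.1 ∪ B'.1 \ B.1 = B.1 \ B'.1
      rw [Finset.not_nonempty_iff_eq_empty.1 hne, Finset.union_empty]
    have hBB : (B.1 \ B'.1).Nonempty := by
      rw [← Finset.card_pos, ← hsd_eq]; omega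
    obtain ⟨i, hi⟩ := hBB
    rw [Finset.mem_sdiff] at hi
    have hsd : i ∈ symmDiff B.1 B'.1 := by
      rw [Finset.mem_symmDiff]; tauto
    have hCne : (B.1.erase i).Nonempty := by
      obtain ⟨x, hx⟩ := B'.2
      exact ⟨x, Finset.mem_erase.2 ⟨fun hxi => hi.2 (hxi ▸ hx), hsub hx⟩⟩
    refine ⟨⟨B.1.erase i, hCne⟩, ?_, ?_⟩
    · show (symmDiff B.1 (B.1.erase i)).card = 1
      rw [sd_erase_self hi.1, Finset.card_singleton]
    · show (symmDiff (B.1.erase i) B'.1).card = _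
      rw [sd_erase_absorb hi.1 hi.2, Finset.card_erase_of_mem hsd]

lemma of_sd_singleton {A A' : Finset (Fin N)} {i : Fin N}
    (h : symmDiff A A' = {i}) (hi' : i ∈ A') : i ∉ A ∧ A' = insert i A := by
  have him : i ∈ symmDiff A A' := by rw [h]; exact Finset.mem_singleton_self i
  rw [Finset.mem_symmDiff] at him
  have hiA : i ∉ A := by tauto
  refine ⟨hiA, ?_⟩
  ext x
  by_cases hx : x = i
  · subst hx; simp [hi']
  · have hxs : x ∉ symmDiff A A' := by rw [h]; simp [hx]
    rw [Finset.mem_symmDiff] at hxs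
    push_neg at hxs
    simp only [Finset.mem_insert, hx, false_or]
    exact ⟨fun hxA' => hxs.2 hxA', fun hxA => hxs.1 hxA⟩

lemma adjacent' (hN : 1 ≤ N) (B B' : RState N) (h : (symmDiff B.1 B'.1).card = 1) :
    ∃ ρ : RState N → RState N → ℝ,
      (∀ x y, 0 ≤ ρ x y) ∧
      (∀ x, ∑ y : RState N, ρ x y = auxP N B x) ∧
      (∀ y, ∑ x : RState N, ρ x y = auxP N B' y) ∧
      (∑ x : RState N, ∑ y : RState N,
        ρ x y * ((symmDiff x.1 y.1).card : ℝ)) = 1 - 1 / (3 * (N:ℝ)) := by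
  obtain ⟨i, hi⟩ := Finset.card_eq_one.1 h
  by_cases hiB' : i ∈ B'.1
  · obtain ⟨hiB, hins⟩ := of_sd_singleton hi hiB'
    exact adjacent hN B B' i hiB hins
  · have hiB : i ∈ B.1 := by
      have him : i ∈ symmDiff B.1 B'.1 := by rw [hi]; exact Finset.mem_singleton_self i
      rw [Finset.mem_symmDiff] at him; tauto
    have hi' : symmDiff B'.1 B.1 = {i} := by rwa [symmDiff_comm]
    obtain ⟨hiB'n, hins⟩ := of_sd_singleton hi' hiB
    obtain ⟨ρ0, hn, hr, hc, hE⟩ := adjacent hN B' B i hiB'n hins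
    refine ⟨fun x y => ρ0 y x, fun x y => hn y x, hc, hr, ?_⟩
    rw [← hE]
    rw [Finset.sum_comm]
    refine Finset.sum_congr rfl fun y _ => Finset.sum_congr rfl fun x _ => ?_
    rw [symmDiff_comm]

lemma one_step (hN : 1 ≤ N) : ∀ k : ℕ, ∀ B B' : RState N,
    (symmDiff B.1 B'.1).card = k →
    ∃ ρ : RState N → RState N → ℝ,
      (∀ x y, 0 ≤ ρ x y) ∧
      (∀ x, ∑ y : RState N, ρ x y = auxP N B x) ∧
      (∀ y, ∑ x : RState N, ρ x y = auxP N B' y) ∧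
      (∑ x : RState N, ∑ y : RState N,
        ρ x y * ((symmDiff x.1 y.1).card : ℝ)) ≤ (1 - 1 / (3 * (N:ℝ))) * k := by
  intro k
  induction k with
  | zero =>
    intro B B' h
    have hBB : B = B' := by
      apply Subtype.ext
      have h0 : symmDiff B.1 B'.1 = ∅ := Finset.card_eq_zero.1 h
      rw [← Finset.bot_eq_empty] at h0
      exact symmDiff_eq_bot.1 h0
    subst hBB
    refine ⟨fun x y => if x = y then auxP N B x else 0, ?_, ?_, ?_, ?_⟩
    · intro x y; dsimp only; split
      · exact auxP_nonneg B x
      · exact le_refl 0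
    · intro x; simp [Finset.sum_ite_eq]
    · intro y; simp [Finset.sum_ite_eq']
    · have hz : ∀ x : RState N, ∑ y : RState N,
          (if x = y then auxP N B x else 0) * ((symmDiff x.1 y.1).card : ℝ) = 0 := by
        intro x
        apply Finset.sum_eq_zero
        intro y _
        by_cases hxy : x = y
        · subst hxy; simp [symmDiff_self]
        · simp [hxy]
      rw [Finset.sum_congr rfl (fun x _ => hz x)]
      simp
  | succ k ih =>
    intro B B' h
    rcases Nat.eq_zero_or_pos k with rfl | hk
    · obtain ⟨ρ, hn, hr, hc, hE⟩ := adjacent' hN B B' h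
      refine ⟨ρ, hn, hr, hc, ?_⟩
      rw [hE]
      norm_num
    · obtain ⟨C, hC1, hC2⟩ := middle B B' (by omega)
      obtain ⟨ρ1, h1n, h1r, h1c, h1E⟩ := adjacent' hN B C hC1
      obtain ⟨ρ2, h2n, h2r, h2c, h2E⟩ := ih C B' (by omega)
      obtain ⟨ρ, hn, hr, hc, hE⟩ := glue h1n h1r h1c h2n h2r h2c
      refine ⟨ρ, hn, hr, hc, ?_⟩
      refine hE.trans ?_
      rw [h1E]
      have : ((k:ℝ)+1) = ((k+1 : ℕ) : ℝ) := by push_cast; ring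
      calc (1 - 1/(3*(N:ℝ))) + (∑ y : RState N, ∑ z : RState N,
            ρ2 y z * ((symmDiff y.1 z.1).card : ℝ))
          ≤ (1 - 1/(3*(N:ℝ))) + (1 - 1/(3*(N:ℝ))) * k := by linarith [h2E]
        _ = (1 - 1/(3*(N:ℝ))) * ((k+1 : ℕ) : ℝ) := by push_cast; ring

lemma kappa_nonneg (hN : 1 ≤ N) : (0:ℝ) ≤ 1 - 1 / (3 * (N:ℝ)) := by
  have h1 : (1:ℝ) ≤ (N:ℝ) := by exact_mod_cast hN
  have h2 : 1 / (3 * (N:ℝ)) ≤ 1 := by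
    rw [div_le_one (by positivity)]; linarith
  linarith

lemma n_step (hN : 1 ≤ N) : ∀ n : ℕ, ∀ B B' : RState N,
    ∃ ρ : RState N → RState N → ℝ,
      (∀ x y, 0 ≤ ρ x y) ∧
      (∀ x, ∑ y : RState N, ρ x y = (auxP N ^ n) B x) ∧
      (∀ y, ∑ x : RState N, ρ x y = (auxP N ^ n) B' y) ∧
      (∑ x : RState N, ∑ y : RState N,
        ρ x y * ((symmDiff x.1 y.1).card : ℝ))
        ≤ (1 - 1 / (3 * (N:ℝ))) ^ n * ((symmDiff B.1 B'.1).card : ℝ) := by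
  intro n
  induction n with
  | zero =>
    intro B B'
    refine ⟨fun x y => if x = B ∧ y = B' then 1 else 0, ?_, ?_, ?_, ?_⟩
    · intro x y; dsimp only; split
      · exact zero_le_one
      · exact le_refl 0
    · intro x
      rw [pow_zero]
      rw [Matrix.one_apply]
      by_cases hx : x = B
      · subst hx; simp [Finset.sum_ite_eq']
      · have hbx : ¬ B = x := fun h => hx h.symm
        simp [hx, hbx]
    · intro y
      rw [pow_zero, Matrix.one_apply]
      by_cases hy : y = B'
      · subst hy; simp [Finset.sum_ite_eq']
      · have hby : ¬ B' = y := fun h => hy h.symm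
        simp [hy, hby]
    · have hcol : ∀ x : RState N, ∑ y : RState N,
          (if x = B ∧ y = B' then (1:ℝ) else 0) * ((symmDiff x.1 y.1).card : ℝ)
          = if x = B then ((symmDiff x.1 B'.1).card : ℝ) else 0 := by
        intro x
        by_cases hx : x = B
        · simp only [hx, true_and]
          rw [Finset.sum_eq_single B']
          · simp [hx]
          · intro y _ hy; simp [fun h : y = B' => hy h]
          · simp
        · simp [hx]
      rw [Finset.sum_congr rfl (fun x _ => hcol x)]
      rw [Finset.sum_ite_eq' Finset.univ B]
      simp
  | succ n ih =>
    intro B B'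
    obtain ⟨ρ1, h1n, h1r, h1c, h1E⟩ := one_step hN (symmDiff B.1 B'.1).card B B' rfl
    choose σ hσn hσr hσc hσE using ih
    refine ⟨fun x y => ∑ p : RState N × RState N, ρ1 p.1 p.2 * σ p.1 p.2 x y,
      ?_, ?_, ?_, ?_⟩
    · intro x y
      exact Finset.sum_nonneg fun p _ => mul_nonneg (h1n p.1 p.2) (hσn p.1 p.2 x y)
    · intro x
      calc ∑ y : RState N, ∑ p : RState N × RState N, ρ1 p.1 p.2 * σ p.1 p.2 x y
          = ∑ p : RState N × RState N, ρ1 p.1 p.2 * ∑ y : RState N, σ p.1 p.2 x y := by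
            rw [Finset.sum_comm]
            exact Finset.sum_congr rfl fun p _ => (Finset.mul_sum _ _ _).symm
        _ = ∑ p : RState N × RState N, ρ1 p.1 p.2 * (auxP N ^ n) p.1 x := by
            exact Finset.sum_congr rfl fun p _ => by rw [hσr p.1 p.2 x]
        _ = ∑ a : RState N, ∑ b : RState N, ρ1 a b * (auxP N ^ n) a x := by
            rw [Fintype.sum_prod_type]
        _ = ∑ a : RState N, auxP N B a * (auxP N ^ n) a x := by
            refine Finset.sum_congr rfl fun a _ => ?_
            rw [← Finset.sum_mul, h1r a]
        _ = (auxP N * auxP N ^ n) B x := (Matrix.mul_apply).symm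
        _ = (auxP N ^ (n+1)) B x := by rw [← pow_succ']
    · intro y
      calc ∑ x : RState N, ∑ p : RState N × RState N, ρ1 p.1 p.2 * σ p.1 p.2 x y
          = ∑ p : RState N × RState N, ρ1 p.1 p.2 * ∑ x : RState N, σ p.1 p.2 x y := by
            rw [Finset.sum_comm]
            exact Finset.sum_congr rfl fun p _ => (Finset.mul_sum _ _ _).symm
        _ = ∑ p : RState N × RState N, ρ1 p.1 p.2 * (auxP N ^ n) p.2 y := by
            exact Finset.sum_congr rfl fun p _ => by rw [hσc p.1 p.2 y]
        _ = ∑ a : RState N, ∑ b : RState N, ρ1 a b * (auxP N ^ n) b y := by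
            rw [Fintype.sum_prod_type]
        _ = ∑ b : RState N, ∑ a : RState N, ρ1 a b * (auxP N ^ n) b y :=
            Finset.sum_comm
        _ = ∑ b : RState N, auxP N B' b * (auxP N ^ n) b y := by
            refine Finset.sum_congr rfl fun b _ => ?_
            rw [← Finset.sum_mul, h1c b]
        _ = (auxP N * auxP N ^ n) B' y := (Matrix.mul_apply).symm
        _ = (auxP N ^ (n+1)) B' y := by rw [← pow_succ']
    · have hκ := kappa_nonneg hN
      calc ∑ x : RState N, ∑ y : RState N,
            (∑ p : RState N × RState N, ρ1 p.1 p.2 * σ p.1 p.2 x y) *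
              ((symmDiff x.1 y.1).card : ℝ)
          = ∑ p : RState N × RState N, ρ1 p.1 p.2 *
              (∑ x : RState N, ∑ y : RState N,
                σ p.1 p.2 x y * ((symmDiff x.1 y.1).card : ℝ)) := by
            have e1 : ∀ x y : RState N,
                (∑ p : RState N × RState N, ρ1 p.1 p.2 * σ p.1 p.2 x y) *
                  ((symmDiff x.1 y.1).card : ℝ)
                = ∑ p : RState N × RState N,
                    ρ1 p.1 p.2 * (σ p.1 p.2 x y * ((symmDiff x.1 y.1).card : ℝ)) := by
              intro x y
              rw [Finset.sum_mul]
              exact Finset.sum_congr rfl fun p _ => mul_assoc _ _ _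
            rw [Finset.sum_congr rfl (fun x (_ : x ∈ Finset.univ) =>
              Finset.sum_congr rfl (fun y _ => e1 x y))]
            rw [Finset.sum_congr rfl (fun x (_ : x ∈ Finset.univ) => Finset.sum_comm)]
            rw [Finset.sum_comm]
            refine Finset.sum_congr rfl fun p _ => ?_
            rw [Finset.mul_sum]
            refine Finset.sum_congr rfl fun x _ => ?_
            rw [Finset.mul_sum]
        _ ≤ ∑ p : RState N × RState N, ρ1 p.1 p.2 *
              ((1 - 1/(3*(N:ℝ)))^n * ((symmDiff p.1.1 p.2.1).card : ℝ)) := by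
            refine Finset.sum_le_sum fun p _ => ?_
            exact mul_le_mul_of_nonneg_left (hσE p.1 p.2) (h1n p.1 p.2)
        _ = (1 - 1/(3*(N:ℝ)))^n * ∑ p : RState N × RState N,
              ρ1 p.1 p.2 * ((symmDiff p.1.1 p.2.1).card : ℝ) := by
            rw [Finset.mul_sum]
            refine Finset.sum_congr rfl fun p _ => ?_
            ring
        _ = (1 - 1/(3*(N:ℝ)))^n * ∑ x : RState N, ∑ y : RState N,
              ρ1 x y * ((symmDiff x.1 y.1).card : ℝ) := by
            rw [Fintype.sum_prod_type]
        _ ≤ (1 - 1/(3*(N:ℝ)))^n *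
              ((1 - 1/(3*(N:ℝ))) * ((symmDiff B.1 B'.1).card : ℝ)) := by
            exact mul_le_mul_of_nonneg_left h1E (pow_nonneg hκ n)
        _ = (1 - 1/(3*(N:ℝ)))^(n+1) * ((symmDiff B.1 B'.1).card : ℝ) := by
            rw [pow_succ']
            ring

end AuxPC

/-- Path coupling for the auxiliary chain: for adjacent nonempty sets (Hamming distance 1)
there is a one-step coupling with expected distance exactly `1 − 1/(3N)`; consequently, for
arbitrary initial sets there is an `n`-step coupling with
`E[d(B_n,B_n')] ≤ (1 − 1/(3N))^n d(B_0,B_0') ≤ N(1 − 1/(3N))^n`. -/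
theorem aux_chain_path_coupling (N : ℕ) (hN : 2 ≤ N) :
    (∀ B B' : RState N, (symmDiff B.1 B'.1).card = 1 →
      ∃ ρ : RState N → RState N → ℝ,
        (∀ x y, 0 ≤ ρ x y) ∧
        (∀ x, ∑ y : RState N, ρ x y = auxP N B x) ∧
        (∀ y, ∑ x : RState N, ρ x y = auxP N B' y) ∧
        (∑ x : RState N, ∑ y : RState N,
          ρ x y * ((symmDiff x.1 y.1).card : ℝ)) = 1 - 1 / (3 * (N : ℝ))) ∧
    (∀ B B' : RState N, ∀ n : ℕ,
      ∃ ρ : RState N → RState N → ℝ,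
        (∀ x y, 0 ≤ ρ x y) ∧
        (∀ x, ∑ y : RState N, ρ x y = (auxP N ^ n) B x) ∧
        (∀ y, ∑ x : RState N, ρ x y = (auxP N ^ n) B' y) ∧
        (∑ x : RState N, ∑ y : RState N,
          ρ x y * ((symmDiff x.1 y.1).card : ℝ))
          ≤ (1 - 1 / (3 * (N : ℝ))) ^ n * ((symmDiff B.1 B'.1).card : ℝ) ∧
        (∑ x : RState N, ∑ y : RState N,
          ρ x y * ((symmDiff x.1 y.1).card : ℝ))
          ≤ (N : ℝ) * (1 - 1 / (3 * (N : ℝ))) ^ n) := by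
  have hN1 : 1 ≤ N := by omega
  constructor
  · intro B B' h
    exact AuxPC.adjacent' hN1 B B' h
  · intro B B' n
    obtain ⟨ρ, hn, hr, hc, hE⟩ := AuxPC.n_step hN1 n B B'
    refine ⟨ρ, hn, hr, hc, hE, ?_⟩
    have hκn : 0 ≤ (1 - 1/(3*(N:ℝ)))^n := pow_nonneg (AuxPC.kappa_nonneg hN1) n
    have hcard : ((symmDiff B.1 B'.1).card : ℝ) ≤ (N:ℝ) := by
      have h2 := Finset.card_le_univ (symmDiff B.1 B'.1)
      rw [Fintype.card_fin] at h2
      exact_mod_cast h2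
    calc ∑ x : RState N, ∑ y : RState N,
          ρ x y * ((symmDiff x.1 y.1).card : ℝ)
        ≤ (1 - 1/(3*(N:ℝ)))^n * ((symmDiff B.1 B'.1).card : ℝ) := hE
      _ ≤ (1 - 1/(3*(N:ℝ)))^n * (N:ℝ) := mul_le_mul_of_nonneg_left hcard hκn
      _ = (N:ℝ) * (1 - 1/(3*(N:ℝ)))^n := mul_comm _ _
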